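/- Let n ≥ 2, let E be a length function on ℂⁿ, and let g : ℂ → ℂ^{n−1} be an entire map such that the function z ↦ E((z, g(z)), (1, g'(z))) is unbounded on ℂ. Put f(z) = (z, g(z)) : ℂ → ℂⁿ. Then there do NOT exist a sequence of positive integers m_k, points p_k ∈ Δ contained in a compact subset of the unit disc Δ, and ρ_k > 0 with ρ_k → 0⁺, such that φ_k(ξ) := f(m_k p_k + m_k ρ_k ξ) converges uniformly on every compact subset of ℂ to a non-constant holomorphic map φ : ℂ → ℂⁿ with sup_{ξ∈ℂ} E(φ(ξ), φ'(ξ)) < ∞. -/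

import Mathlib

/-!
The first coordinate of `f (m_k p_k + m_k ρ_k ξ)` is the affine function `c_k + d_k ξ`, so
convergence at `ξ = 0` and `ξ = 1` forces `c_k → a` and `d_k → b`, and the limit curve is the
reparametrisation `φ ξ = f (a + b ξ)`. It is non-constant only if `b ≠ 0`, and then homogeneity
of `E` gives `E (φ ξ, φ' ξ) = ‖b‖ E (f z, f' z)` with `z = a + b ξ` ranging over all of `ℂ`;
so a bound for `φ` would bound `E (f, f')`.
-/

open Filter Topology

theorem tendsto_coeffs_of_tendsto_affine {ι R : Type*} [Ring R] [TopologicalSpace R]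
    [IsTopologicalRing R] {l : Filter ι} {c d : ι → R} {u : R → R}
    (h : ∀ x, Tendsto (fun k => c k + d k * x) l (𝓝 (u x))) :
    Tendsto c l (𝓝 (u 0)) ∧ Tendsto d l (𝓝 (u 1 - u 0)) := by
  have hc : Tendsto c l (𝓝 (u 0)) := by simpa using h 0
  exact ⟨hc, by simpa using (h 1).sub hc⟩

theorem exists_bound_of_bound_comp_affine {𝕜 X V : Type*} [NormedField 𝕜] [SMul 𝕜 V]
    {E : X → V → ℝ} (hEhom : ∀ z (a : 𝕜) v, E z (a • v) = ‖a‖ * E z v)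
    {F : 𝕜 → X} {F' : 𝕜 → V} {a b : 𝕜} (hb : b ≠ 0)
    (hbdd : ∃ C, ∀ ξ, E (F (a + b * ξ)) (b • F' (a + b * ξ)) ≤ C) :
    ∃ C, ∀ z, E (F z) (F' z) ≤ C := by
  obtain ⟨C, hC⟩ := hbdd
  refine ⟨C / ‖b‖, fun z => ?_⟩
  have hz : a + b * ((z - a) / b) = z := by field_simp; ring
  have := hC ((z - a) / b)
  rw [hz, hEhom] at this
  rwa [le_div_iff₀ (norm_pos_iff.mpr hb), mul_comm]

section GraphMap

variable {R : Type*} {m : ℕ}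

def graphMap (g : R → Fin m → R) (z : R) : Fin (m + 1) → R := Fin.cons z (g z)

@[simp]
theorem graphMap_apply_zero (g : R → Fin m → R) (z : R) : graphMap g z 0 = z :=
  rfl

theorem Continuous.graphMap [TopologicalSpace R] {g : R → Fin m → R} (hg : Continuous g) :
    Continuous (graphMap g) :=
  continuous_id.finCons hg (A := fun _ => R)

theorem HasDerivAt.graphMap {𝕜 : Type*} [NontriviallyNormedField 𝕜] {g : 𝕜 → Fin m → 𝕜}
    {g' : Fin m → 𝕜} {z : 𝕜} (hg : HasDerivAt g g' z) :
    HasDerivAt (graphMap g) (Fin.cons 1 g') z := by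
  rw [hasDerivAt_pi]
  exact Fin.cases (hasDerivAt_id' z) (hasDerivAt_pi.1 hg)

theorem exists_eq_graphMap_affine_of_tendsto [Ring R] [TopologicalSpace R] [IsTopologicalRing R]
    [T2Space R] {g : R → Fin m → R} (hg : Continuous g) {c d : ℕ → R} {φ : R → Fin (m + 1) → R}
    (h : ∀ ξ, Tendsto (fun k => graphMap g (c k + d k * ξ)) atTop (𝓝 (φ ξ))) :
    ∃ a b, φ = fun ξ => graphMap g (a + b * ξ) := by
  have hfirst : ∀ ξ, Tendsto (fun k => c k + d k * ξ) atTop (𝓝 (φ ξ 0)) := fun ξ => by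
    simpa using tendsto_pi_nhds.1 (h ξ) 0
  obtain ⟨hc, hd⟩ := tendsto_coeffs_of_tendsto_affine hfirst
  exact ⟨_, _, funext fun ξ => tendsto_nhds_unique (h ξ)
    ((hg.graphMap.tendsto _).comp (hc.add (hd.mul_const ξ)))⟩

end GraphMap

theorem stmt2_general (m : ℕ)
    (E : (Fin (m + 1) → ℂ) → (Fin (m + 1) → ℂ) → ℝ)
    (hEhom : ∀ (z : Fin (m + 1) → ℂ) (a : ℂ) (v : Fin (m + 1) → ℂ),
      E z (a • v) = ‖a‖ * E z v)
    (g : ℂ → (Fin m → ℂ)) (hg : Differentiable ℂ g)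
    (hunbdd : ¬ ∃ C : ℝ, ∀ z : ℂ,
      E (Fin.cons z (g z)) (Fin.cons 1 (deriv g z)) ≤ C) :
    ¬ ∃ (mk : ℕ → ℕ) (p : ℕ → ℂ) (ρ : ℕ → ℝ) (φ : ℂ → (Fin (m + 1) → ℂ)),
        (∀ k, 0 < mk k) ∧
        -- the `p k` lie in a compact subset of the unit disc
        (∃ r : ℝ, r < 1 ∧ ∀ k, ‖p k‖ ≤ r) ∧
        (∀ k, 0 < ρ k) ∧ Tendsto ρ atTop (𝓝 0) ∧
        Differentiable ℂ φ ∧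
        (¬ ∃ c, ∀ ξ : ℂ, φ ξ = c) ∧
        (∃ C : ℝ, ∀ ξ : ℂ, E (φ ξ) (deriv φ ξ) ≤ C) ∧
        (∀ K : Set ℂ, IsCompact K →
          TendstoUniformlyOn
            (fun k ξ => Fin.cons ((mk k : ℂ) * p k + (mk k : ℂ) * (ρ k : ℂ) * ξ)
              (g ((mk k : ℂ) * p k + (mk k : ℂ) * (ρ k : ℂ) * ξ)))
            φ atTop K) := by
  rintro ⟨mk, p, ρ, φ, -, -, -, -, -, hφnc, ⟨C, hC⟩, hconv⟩
  obtain ⟨a, b, rfl⟩ := exists_eq_graphMap_affine_of_tendsto hg.continuous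
    fun ξ => (hconv {ξ} isCompact_singleton).tendsto_at rfl
  have hb : b ≠ 0 := by
    rintro rfl
    exact hφnc ⟨graphMap g a, by simp⟩
  have haffine : ∀ ξ, HasDerivAt (fun ξ => a + b * ξ) b ξ := fun ξ => by
    simpa using ((hasDerivAt_id ξ).const_mul b).const_add a
  have hderiv : ∀ ξ, deriv (fun ξ => graphMap g (a + b * ξ)) ξ
      = b • Fin.cons 1 (deriv g (a + b * ξ)) := fun ξ =>
    ((hg _).hasDerivAt.graphMap.scomp ξ (haffine ξ)).deriv
  exact hunbdd (exists_bound_of_bound_comp_affine hEhom hb ⟨C, fun ξ => hderiv ξ ▸ hC ξ⟩)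

/-- **Key construction in the proof that `ℂⁿ` is not of `E`-limit type.**
Let `n = m + 1 ≥ 2`, let `E` be a length function on `ℂⁿ`, and let `g : ℂ → ℂ^m` be entire
with `z ↦ E((z, g z), (1, g' z))` unbounded on `ℂ`. Put `f z = (z, g z)`.
Then there is no rescaling `φ_k (ξ) = f (m_k p_k + m_k ρ_k ξ)` (with `m_k` positive integers,
`p_k` in a compact subset of the unit disc, `ρ_k → 0⁺`) converging uniformly on compact
subsets of `ℂ` to a non-constant holomorphic curve with bounded `E`-derivative. -/
theorem stmt2 (m : ℕ) (hm : 1 ≤ m)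
    (E : (Fin (m + 1) → ℂ) → (Fin (m + 1) → ℂ) → ℝ)
    (hEcont : Continuous fun p : (Fin (m + 1) → ℂ) × (Fin (m + 1) → ℂ) => E p.1 p.2)
    (hEnonneg : ∀ z v, 0 ≤ E z v)
    (hEzero : ∀ z v, E z v = 0 ↔ v = 0)
    (hEhom : ∀ (z : Fin (m + 1) → ℂ) (a : ℂ) (v : Fin (m + 1) → ℂ),
      E z (a • v) = ‖a‖ * E z v)
    (g : ℂ → (Fin m → ℂ)) (hg : Differentiable ℂ g)
    (hunbdd : ¬ ∃ C : ℝ, ∀ z : ℂ,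
      E (Fin.cons z (g z)) (Fin.cons 1 (deriv g z)) ≤ C) :
    ¬ ∃ (mk : ℕ → ℕ) (p : ℕ → ℂ) (ρ : ℕ → ℝ) (φ : ℂ → (Fin (m + 1) → ℂ)),
        (∀ k, 0 < mk k) ∧
        -- the `p k` lie in a compact subset of the unit disc
        (∃ r : ℝ, r < 1 ∧ ∀ k, ‖p k‖ ≤ r) ∧
        (∀ k, 0 < ρ k) ∧ Tendsto ρ atTop (𝓝 0) ∧
        Differentiable ℂ φ ∧
        (¬ ∃ c, ∀ ξ : ℂ, φ ξ = c) ∧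
        (∃ C : ℝ, ∀ ξ : ℂ, E (φ ξ) (deriv φ ξ) ≤ C) ∧
        (∀ K : Set ℂ, IsCompact K →
          TendstoUniformlyOn
            (fun k ξ => Fin.cons ((mk k : ℂ) * p k + (mk k : ℂ) * (ρ k : ℂ) * ξ)
              (g ((mk k : ℂ) * p k + (mk k : ℂ) * (ρ k : ℂ) * ξ)))
            φ atTop K) :=
  stmt2_general m E hEhom g hg hunbdd
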